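/- Let R be a noetherian ring, x₁, …, x_d a regular sequence on R, and t ≥ 0. Then (x₁⋯x_d)^t ∉ (x₁^{t+1}, …, x_d^{t+1}). In particular, in a local ring admitting a regular sequence of parameters, the paraclass 1/(x₁⋯x_d) is nonzero in H^d_m(R). -/

import Mathlib

/-!
Localising at a maximal ideal containing the `xᵢ` we may assume `R` local, where a weakly regular
sequence in the maximal ideal stays weakly regular under every permutation. Powers of the elements
of a regular sequence again form a regular sequence, by the exact sequences
`0 → R ⧸ (I + (aⁿ)) → R ⧸ (I + (aⁿ⁺¹)) → R ⧸ (I + (a)) → 0`. So if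
`z (x₁⋯x_d)ᵗ = w + c x₁ᵗ⁺¹` with `w ∈ (x₂ᵗ⁺¹, …, x_dᵗ⁺¹)`, then `x₁ᵗ` is regular modulo that
ideal and cancels, giving `z (x₂⋯x_d)ᵗ ∈ (x₁) + (x₂ᵗ⁺¹, …, x_dᵗ⁺¹)`; by induction modulo `(x₁)`,
`z ∈ (x₁, …, x_d)`. For `z = 1` this puts `1` in the maximal ideal.
-/

namespace Ideal

variable {R : Type*} [CommRing R]

/-- Weak regularity of `l` on `R ⧸ I`, unfolded one element at a time so that inductions can
vary `I`. -/
def IsWeaklyRegularMod (I : Ideal R) : List R → Prop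
  | [] => True
  | a :: l => IsSMulRegular (R ⧸ I) a ∧ IsWeaklyRegularMod (I ⊔ span {a}) l

/-- Multiplication by `a` is injective as a map `R ⧸ (I + (a')) → R ⧸ (I + (a a'))`. -/
def MulLeftInjectiveMod (I : Ideal R) (a a' : R) : Prop :=
  ∀ r, a * r ∈ I ⊔ span {a * a'} → r ∈ I ⊔ span {a'}

lemma mem_sup_span_singleton {I : Ideal R} {a r : R} :
    r ∈ I ⊔ span {a} ↔ ∃ u ∈ I, ∃ c, r = u + c * a := by
  rw [sup_comm, mem_span_singleton_sup]
  exact ⟨fun ⟨c, u, hu, h⟩ => ⟨u, hu, c, by rw [← h, add_comm]⟩,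
    fun ⟨u, hu, c, h⟩ => ⟨c, u, hu, by rw [h, add_comm]⟩⟩

lemma mul_mem_sup_span_singleton (I : Ideal R) (a c : R) : c * a ∈ I ⊔ span {a} :=
  mem_sup_right (mul_mem_left _ c (mem_span_singleton_self a))

variable {I : Ideal R} {a a' b : R}

lemma MulLeftInjectiveMod.of_isSMulRegular (ha : IsSMulRegular (R ⧸ I) a) (a' : R) :
    MulLeftInjectiveMod I a a' := by
  intro r hr
  obtain ⟨u, hu, c, hc⟩ := mem_sup_span_singleton.mp hr
  have hrc : r - c * a' ∈ I :=
    mem_of_isSMulRegular_quotient_of_smul_mem ha <| by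
      rwa [smul_eq_mul, show a * (r - c * a') = u by linear_combination hc]
  simpa using add_mem (mem_sup_left hrc) (mul_mem_sup_span_singleton I a' c)

lemma MulLeftInjectiveMod.sup_span (hinj : MulLeftInjectiveMod I a a')
    (hba : IsSMulRegular (R ⧸ I ⊔ span {a}) b) : MulLeftInjectiveMod (I ⊔ span {b}) a a' := by
  intro r hr
  obtain ⟨p, hp, c, hc⟩ := mem_sup_span_singleton.mp hr
  obtain ⟨u, hu, e, rfl⟩ := mem_sup_span_singleton.mp hp
  have hbe : b * e ∈ I ⊔ span {a} := by
    rw [show b * e = (r - c * a') * a - u by linear_combination -hc]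
    exact sub_mem (mul_mem_sup_span_singleton I a _) (mem_sup_left hu)
  obtain ⟨u', hu', s, rfl⟩ :=
    mem_sup_span_singleton.mp (mem_of_isSMulRegular_quotient_of_smul_mem hba hbe)
  have hrest : r - s * b - c * a' ∈ I ⊔ span {a'} := by
    refine hinj _ (mem_sup_left ?_)
    rw [show a * (r - s * b - c * a') = u + u' * b by linear_combination hc]
    exact add_mem hu (mul_mem_right _ _ hu')
  rw [show r = (r - s * b - c * a') + s * b + c * a' by ring]
  refine add_mem (add_mem ?_ (mem_sup_left (mul_mem_sup_span_singleton I b s)))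
    (mul_mem_sup_span_singleton _ a' c)
  exact sup_le_sup_right (le_sup_left : I ≤ I ⊔ span {b}) _ hrest

lemma isSMulRegular_sup_span_mul (hba : IsSMulRegular (R ⧸ I ⊔ span {a}) b)
    (hba' : IsSMulRegular (R ⧸ I ⊔ span {a'}) b) (hinj : MulLeftInjectiveMod I a a') :
    IsSMulRegular (R ⧸ I ⊔ span {a * a'}) b := by
  refine (isSMulRegular_quotient_iff_mem_of_smul_mem _ _).mpr fun r hr => ?_
  have hr_a : b * r ∈ I ⊔ span {a} :=
    sup_le_sup_left (span_singleton_le_span_singleton.mpr (dvd_mul_right a a')) I hr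
  obtain ⟨v, hv, c, rfl⟩ :=
    mem_sup_span_singleton.mp (mem_of_isSMulRegular_quotient_of_smul_mem hba hr_a)
  have hbc : a * (b * c) ∈ I ⊔ span {a * a'} := by
    rw [show a * (b * c) = b * (v + c * a) - b * v by ring]
    exact sub_mem hr (mem_sup_left (mul_mem_left _ _ hv))
  obtain ⟨w, hw, f, rfl⟩ :=
    mem_sup_span_singleton.mp (mem_of_isSMulRegular_quotient_of_smul_mem hba' (hinj _ hbc))
  rw [show v + (w + f * a') * a = (v + w * a) + f * (a * a') by ring]
  exact add_mem (mem_sup_left (add_mem hv (mul_mem_right _ _ hw)))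
    (mul_mem_sup_span_singleton I _ f)

namespace IsWeaklyRegularMod

/-- The short exact sequence `0 → R ⧸ (I + (a')) → R ⧸ (I + (a a')) → R ⧸ (I + (a)) → 0`:
a sequence weakly regular on the outer terms is weakly regular on the middle one. -/
lemma sup_span_mul : ∀ {l : List R} {I : Ideal R},
    IsWeaklyRegularMod (I ⊔ span {a}) l → IsWeaklyRegularMod (I ⊔ span {a'}) l →
      MulLeftInjectiveMod I a a' → IsWeaklyRegularMod (I ⊔ span {a * a'}) l
  | [], _, _, _, _ => trivial
  | b :: _, I, ⟨hba, hla⟩, ⟨hba', hla'⟩, hinj => by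
    refine ⟨isSMulRegular_sup_span_mul hba hba' hinj, ?_⟩
    rw [sup_right_comm] at hla hla' ⊢
    exact sup_span_mul hla hla' (hinj.sup_span hba)

lemma pow_succ_cons {l : List R} (h : IsWeaklyRegularMod I (a :: l)) (n : ℕ) :
    IsWeaklyRegularMod I (a ^ (n + 1) :: l) := by
  induction n with
  | zero => simpa using h
  | succ n ih =>
    refine ⟨h.1.pow _, ?_⟩
    rw [pow_succ']
    exact sup_span_mul h.2 ih.2 (.of_isSMulRegular h.1 _)

lemma map_pow_succ_append (n : ℕ) : ∀ (l₁ : List R) {l₂ : List R} {I : Ideal R},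
    IsWeaklyRegularMod I (l₁ ++ l₂) → IsWeaklyRegularMod I (l₁.map (· ^ (n + 1)) ++ l₂)
  | [], _, _, h => h
  | _ :: l₁, _, _, h => by
    obtain ⟨ha, hl⟩ := pow_succ_cons h n
    exact ⟨ha, map_pow_succ_append n l₁ hl⟩

lemma isSMulRegular_of_append_singleton : ∀ {l : List R} {y : R} {I : Ideal R},
    IsWeaklyRegularMod I (l ++ [y]) → IsSMulRegular (R ⧸ I ⊔ ofList l) y
  | [], _, _, h => by rw [ofList_nil, sup_bot_eq]; exact h.1
  | a :: l, _, I, h => by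
    rw [ofList_cons, ← sup_assoc]
    exact isSMulRegular_of_append_singleton h.2

lemma of_forall_isSMulRegular : ∀ {l : List R} {I : Ideal R},
    (∀ i (h : i < l.length), IsSMulRegular (R ⧸ I ⊔ ofList (l.take i)) l[i]) →
      IsWeaklyRegularMod I l
  | [], _, _ => trivial
  | a :: l, I, h => by
    have ha := h 0 (by simp)
    rw [List.take_zero, ofList_nil, sup_bot_eq, List.getElem_cons_zero] at ha
    refine ⟨ha, of_forall_isSMulRegular fun i hi => ?_⟩
    have hi' := h (i + 1) (by simpa using hi)
    rwa [List.getElem_cons_succ, List.take_succ_cons, ofList_cons, ← sup_assoc] at hi'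

end IsWeaklyRegularMod

open IsWeaklyRegularMod in
/-- Permutations are needed: the first element must be regular modulo the powers of the others. -/
theorem mem_sup_ofList_of_mul_prod_pow_mem (t : ℕ) : ∀ {l : List R} {I : Ideal R},
    (∀ l', l'.Perm l → IsWeaklyRegularMod I l') → ∀ {z : R},
      z * l.prod ^ t ∈ I ⊔ ofList (l.map (· ^ (t + 1))) → z ∈ I ⊔ ofList l
  | [], _, _, _, hz => by simpa using hz
  | y :: l, I, hperm, z, hz => by
    set J := I ⊔ ofList (l.map (· ^ (t + 1)))
    have hy : IsSMulRegular (R ⧸ J) y := isSMulRegular_of_append_singleton <|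
      map_pow_succ_append t l (hperm _ (List.perm_append_singleton y l))
    rw [List.map_cons, ofList_cons, sup_left_comm, sup_comm] at hz
    obtain ⟨w, hw, c, hc⟩ := mem_sup_span_singleton.mp hz
    rw [List.prod_cons] at hc
    have hJ : z * l.prod ^ t - c * y ∈ J :=
      mem_of_isSMulRegular_quotient_of_smul_mem (hy.pow t) <| by
        rwa [smul_eq_mul, show y ^ t * (z * l.prod ^ t - c * y) = w by linear_combination hc]
    have hzy : z * l.prod ^ t ∈ I ⊔ span {y} ⊔ ofList (l.map (· ^ (t + 1))) := by
      rw [show z * l.prod ^ t = (z * l.prod ^ t - c * y) + c * y by ring]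
      exact add_mem (sup_le_sup_right (le_sup_left : I ≤ I ⊔ span {y}) _ hJ)
        (mem_sup_left (mul_mem_sup_span_singleton I y c))
    rw [ofList_cons, ← sup_assoc]
    exact mem_sup_ofList_of_mul_prod_pow_mem t (fun l' hl' => (hperm _ (hl'.cons y)).2) hzy

end Ideal

open Ideal RingTheory.Sequence

lemma RingTheory.Sequence.IsWeaklyRegular.isWeaklyRegularMod_bot {R : Type*} [CommRing R]
    {l : List R} (h : IsWeaklyRegular R l) : IsWeaklyRegularMod ⊥ l := by
  refine IsWeaklyRegularMod.of_forall_isSMulRegular fun i hi => ?_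
  have := h.regular_mod_prev i hi
  rwa [smul_eq_mul, mul_top, ← bot_sup_eq (ofList _)] at this

theorem IsLocalRing.prod_pow_notMem_ofList_map_pow {R : Type*} [CommRing R] [IsLocalRing R]
    [IsNoetherianRing R] {l : List R} (hl : IsWeaklyRegular R l)
    (hmax : ∀ x ∈ l, x ∈ maximalIdeal R) (t : ℕ) :
    l.prod ^ t ∉ ofList (l.map (· ^ (t + 1))) := by
  intro h
  have hperm (l' : List R) (hl' : l'.Perm l) : IsWeaklyRegularMod ⊥ l' :=
    (isWeaklyRegular_of_perm_of_subset_maximalIdeal hl hl'.symm hmax).isWeaklyRegularMod_bot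
  have hone : (1 : R) ∈ ofList l := by
    simpa using mem_sup_ofList_of_mul_prod_pow_mem t hperm (z := 1) (by simpa using h)
  exact (maximalIdeal.isMaximal R).ne_top (eq_top_of_isUnit_mem _
    (span_le.mpr hmax hone) isUnit_one)

/-- monomial property of regular sequences: if `x₁,…,x_d` is a regular
sequence on a noetherian ring `R` then `(x₁⋯x_d)^t ∉ (x₁^{t+1},…,x_d^{t+1})`; in
particular the paraclass `1/(x₁⋯x_d)` is nonzero in `H^d_m(R)`. -/
theorem stmt_10 {R : Type*} [CommRing R] [IsNoetherianRing R] {d : ℕ}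
    (x : Fin d → R) (hreg : RingTheory.Sequence.IsRegular R (List.ofFn x)) (t : ℕ) :
    (∏ i, x i) ^ t ∉ Ideal.span (Set.range fun i => x i ^ (t + 1)) := by
  have hspan : span (Set.range fun i => x i ^ (t + 1)) =
      ofList ((List.ofFn x).map (· ^ (t + 1))) := by
    rw [List.map_ofFn]
    exact congrArg span (Set.ext fun _ => List.mem_ofFn.symm)
  rw [hspan, ← List.prod_ofFn]
  intro hmem
  have hproper : ofList (List.ofFn x) ≠ ⊤ := by
    simpa [smul_eq_mul, mul_top, eq_comm] using hreg.top_ne_smul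
  obtain ⟨m, hm, hle⟩ := exists_le_maximal _ hproper
  let Rₘ := Localization.AtPrime m
  have : IsNoetherianRing Rₘ := IsLocalization.isNoetherianRing m.primeCompl Rₘ ‹_›
  refine IsLocalRing.prod_pow_notMem_ofList_map_pow
    (hreg.toIsWeaklyRegular.of_isLocalization Rₘ m.primeCompl) ?_ t ?_
  · simp only [List.mem_map]
    rintro _ ⟨a, ha, rfl⟩
    exact (IsLocalization.AtPrime.to_map_mem_maximal_iff Rₘ m a).mpr (hle (subset_span ha))
  · simpa [map_list_prod, List.map_map, Function.comp_def] using
      mem_map_of_mem (algebraMap R Rₘ) hmem
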